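/- arXiv:math/9809051 — 2 statements merged into one kernel-verified Lean document; each statement's English description precedes it below -/
import Mathlib

section
/- With the same definitions (x₀ = x̂₀ + α(x̂₁p̂₂ − p̂₁x̂₂), x₁ = cos(αp̂₀)x̂₁ − sin(αp̂₀)x̂₂, x₂ = sin(αp̂₀)x̂₁ + cos(αp̂₀)x̂₂, p_μ = p̂_μ), the position–momentum cross relations hold: [x₀, p₁] = iℏα p₂, [x₀, p₂] = −iℏα p₁, [p₁, x₁] = −iℏ cos(αp̂₀), [p₁, x₂] = −iℏ sin(αp̂₀), [p₂, x₁] = iℏ sin(αp̂₀), [p₂, x₂] = −iℏ cos(αp̂₀), and the momenta commute among themselves: [p_μ, p_ν] = 0. -/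
/-- Twisted Euclidean phase space: the redefined positions
`x₀ = x̂₀ + α(x̂₁p̂₂ − p̂₁x̂₂)`, `x₁ = cos(αp̂₀)x̂₁ − sin(αp̂₀)x̂₂`,
`x₂ = sin(αp̂₀)x̂₁ + cos(αp̂₀)x̂₂` satisfy `[x₀,x₁] = 2iℏα x₂` and
`[x₀,x₂] = −2iℏα x₁`.  The elements `C`, `S` play the role of
`cos(αp̂₀)`, `sin(αp̂₀)`: they commute with everything except `x̂₀`,
with which they satisfy the formal-power-series derivative relations. -/
theorem stmt_4 {A : Type*} [Ring A] [Algebra ℂ A] (ℏ α : ℝ) (hℏ : 0 < ℏ)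
    (X0 X1 X2 P0 P1 P2 C S : A)
    -- Heisenberg relations [x̂_μ, p̂_ν] = iℏ g_{μν}, g = diag(−1,1,1)
    (hx0p0 : X0 * P0 - P0 * X0 = (-(Complex.I * ℏ) : ℂ) • (1 : A))
    (hx1p1 : X1 * P1 - P1 * X1 = ((Complex.I * ℏ) : ℂ) • (1 : A))
    (hx2p2 : X2 * P2 - P2 * X2 = ((Complex.I * ℏ) : ℂ) • (1 : A))
    (hx0p1 : Commute X0 P1) (hx0p2 : Commute X0 P2)
    (hx1p0 : Commute X1 P0) (hx1p2 : Commute X1 P2)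
    (hx2p0 : Commute X2 P0) (hx2p1 : Commute X2 P1)
    (hx01 : Commute X0 X1) (hx02 : Commute X0 X2) (hx12 : Commute X1 X2)
    (hp01 : Commute P0 P1) (hp02 : Commute P0 P2) (hp12 : Commute P1 P2)
    -- C = cos(αp̂₀), S = sin(αp̂₀) as formal power series in p̂₀
    (hCx1 : Commute C X1) (hCx2 : Commute C X2)
    (hSx1 : Commute S X1) (hSx2 : Commute S X2)
    (hCp0 : Commute C P0) (hCp1 : Commute C P1) (hCp2 : Commute C P2)
    (hSp0 : Commute S P0) (hSp1 : Commute S P1) (hSp2 : Commute S P2)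
    (hCS : Commute C S) (hpyth : C * C + S * S = 1)
    (hx0C : X0 * C - C * X0 = ((Complex.I * ℏ * α) : ℂ) • S)
    (hx0S : X0 * S - S * X0 = (-(Complex.I * ℏ * α) : ℂ) • C) :
    (X0 + (α : ℂ) • (X1 * P2 - P1 * X2)) * (C * X1 - S * X2)
        - (C * X1 - S * X2) * (X0 + (α : ℂ) • (X1 * P2 - P1 * X2))
      = ((2 * Complex.I * ℏ * α) : ℂ) • (S * X1 + C * X2) ∧
    -- position–momentum cross relations and commuting momenta
    ((X0 + (α : ℂ) • (X1 * P2 - P1 * X2)) * P1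
        - P1 * (X0 + (α : ℂ) • (X1 * P2 - P1 * X2))
      = ((Complex.I * ℏ * α) : ℂ) • P2) ∧
    ((X0 + (α : ℂ) • (X1 * P2 - P1 * X2)) * P2
        - P2 * (X0 + (α : ℂ) • (X1 * P2 - P1 * X2))
      = (-(Complex.I * ℏ * α) : ℂ) • P1) ∧
    (P1 * (C * X1 - S * X2) - (C * X1 - S * X2) * P1
      = (-(Complex.I * ℏ) : ℂ) • C) ∧
    (P1 * (S * X1 + C * X2) - (S * X1 + C * X2) * P1
      = (-(Complex.I * ℏ) : ℂ) • S) ∧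
    (P2 * (C * X1 - S * X2) - (C * X1 - S * X2) * P2
      = ((Complex.I * ℏ) : ℂ) • S) ∧
    (P2 * (S * X1 + C * X2) - (S * X1 + C * X2) * P2
      = (-(Complex.I * ℏ) : ℂ) • C) ∧
    (P0 * P1 - P1 * P0 = 0) ∧ (P0 * P2 - P2 * P0 = 0) ∧ (P1 * P2 - P2 * P1 = 0) := by
  
  have hb1 : (X1 * P2 - P1 * X2) * X1 - X1 * (X1 * P2 - P1 * X2)
      = ((Complex.I * ℏ) : ℂ) • X2 := by
    linear_combination (norm := (noncomm_ring; all_goals (match_scalars <;> (push_cast [zsmul_eq_mul, nsmul_eq_mul]; ring1))))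
      -(X1 * hx1p2.eq) + hx1p1 * X2 + P1 * hx12.eq
  have hb2 : (X1 * P2 - P1 * X2) * X2 - X2 * (X1 * P2 - P1 * X2)
      = (-(Complex.I * ℏ) : ℂ) • X1 := by
    linear_combination (norm := (noncomm_ring; all_goals (match_scalars <;> (push_cast [zsmul_eq_mul, nsmul_eq_mul]; ring1))))
      -(X1 * hx2p2) + hx12.eq * P2 + hx2p1.eq * X2
  have hBC : Commute (X1 * P2 - P1 * X2) C :=
    ((hCx1.symm.mul_left hCp2.symm).sub_left (hCp1.symm.mul_left hCx2.symm))
  have hBS : Commute (X1 * P2 - P1 * X2) S :=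
    ((hSx1.symm.mul_left hSp2.symm).sub_left (hSp1.symm.mul_left hSx2.symm))
  have h2 : (X1 * P2 - P1 * X2) * (C * X1 - S * X2)
      - (C * X1 - S * X2) * (X1 * P2 - P1 * X2)
      = ((Complex.I * ℏ) : ℂ) • (S * X1 + C * X2) := by
    linear_combination (norm := (noncomm_ring; all_goals (match_scalars <;> (push_cast [zsmul_eq_mul, nsmul_eq_mul]; ring1))))
      hBC.eq * X1 + C * hb1 - hBS.eq * X2 - S * hb2
  have h1 : X0 * (C * X1 - S * X2) - (C * X1 - S * X2) * X0
      = ((Complex.I * ℏ * α) : ℂ) • (S * X1 + C * X2) := by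
    linear_combination (norm := (noncomm_ring; all_goals (match_scalars <;> (push_cast [zsmul_eq_mul, nsmul_eq_mul]; ring1))))
      hx0C * X1 + C * hx01.eq - hx0S * X2 - S * hx02.eq
  refine ⟨?_, ?_, ?_, ?_, ?_, ?_, ?_, ?_, ?_, ?_⟩
  · linear_combination (norm := (noncomm_ring; all_goals (match_scalars <;> (push_cast [zsmul_eq_mul, nsmul_eq_mul]; ring1)))) h1 + (α : ℂ) • h2
  · linear_combination (norm := (noncomm_ring; all_goals (match_scalars <;> (push_cast [zsmul_eq_mul, nsmul_eq_mul]; ring1))))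
      hx0p1.eq + (α : ℂ) • (hx1p1 * P2) - (α : ℂ) • (X1 * hp12.eq)
        - (α : ℂ) • (P1 * hx2p1.eq)
  · linear_combination (norm := (noncomm_ring; all_goals (match_scalars <;> (push_cast [zsmul_eq_mul, nsmul_eq_mul]; ring1))))
      hx0p2.eq + (α : ℂ) • (hx1p2.eq * P2) - (α : ℂ) • (P1 * hx2p2)
        - (α : ℂ) • (hp12.eq * X2)
  · linear_combination (norm := (noncomm_ring; all_goals (match_scalars <;> (push_cast [zsmul_eq_mul, nsmul_eq_mul]; ring1))))
      -(hCp1.eq * X1) - C * hx1p1 + hSp1.eq * X2 + S * hx2p1.eq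
  · linear_combination (norm := (noncomm_ring; all_goals (match_scalars <;> (push_cast [zsmul_eq_mul, nsmul_eq_mul]; ring1))))
      -(hSp1.eq * X1) - S * hx1p1 - hCp1.eq * X2 - C * hx2p1.eq
  · linear_combination (norm := (noncomm_ring; all_goals (match_scalars <;> (push_cast [zsmul_eq_mul, nsmul_eq_mul]; ring1))))
      -(hCp2.eq * X1) - C * hx1p2.eq + hSp2.eq * X2 + S * hx2p2
  · linear_combination (norm := (noncomm_ring; all_goals (match_scalars <;> (push_cast [zsmul_eq_mul, nsmul_eq_mul]; ring1))))
      -(hSp2.eq * X1) - S * hx1p2.eq - hCp2.eq * X2 - C * hx2p2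
  · exact sub_eq_zero.mpr hp01.eq
  · exact sub_eq_zero.mpr hp02.eq
  · exact sub_eq_zero.mpr hp12.eq
end

section
/- With x₁ = x̂₁ + β(x̂₃p̂₀ − p̂₃x̂₀), x₀ = cosh(βp̂₁)x̂₀ + sinh(βp̂₁)x̂₃, x₃ = sinh(βp̂₁)x̂₀ + cosh(βp̂₁)x̂₃, and p_μ = p̂_μ, the cross relations hold: [p₀, x₁] = −iℏβ p₃, [p₃, x₁] = −iℏβ p₀, [p₀, x₃] = iℏ sinh(βp̂₁), [p₃, x₀] = −iℏ sinh(βp̂₁), [p₀, x₀] = iℏ cosh(βp̂₁), [p₃, x₃] = −iℏ cosh(βp̂₁), and the momenta mutually commute. -/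
/-- Twisted hyperbolic phase space: with `x₁ = x̂₁ + β(x̂₃p̂₀ − p̂₃x̂₀)`,
`x₀ = cosh(βp̂₁)x̂₀ + sinh(βp̂₁)x̂₃`, `x₃ = sinh(βp̂₁)x̂₀ + cosh(βp̂₁)x̂₃`,
one has `[x₀,x₁] = −2iℏβ x₃` and `[x₃,x₁] = −2iℏβ x₀`.
`Ch`, `Sh` play the role of `cosh(βp̂₁)`, `sinh(βp̂₁)` as formal power
series in `p̂₁`. -/
theorem stmt_6 {A : Type*} [Ring A] [Algebra ℂ A] (ℏ β : ℝ) (hℏ : 0 < ℏ)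
    (X0 X1 X3 P0 P1 P3 Ch Sh : A)
    -- Heisenberg relations [x̂_μ, p̂_ν] = iℏ g_{μν}, g₀₀ = −1, g₁₁ = g₃₃ = 1
    (hx0p0 : X0 * P0 - P0 * X0 = (-(Complex.I * ℏ) : ℂ) • (1 : A))
    (hx1p1 : X1 * P1 - P1 * X1 = ((Complex.I * ℏ) : ℂ) • (1 : A))
    (hx3p3 : X3 * P3 - P3 * X3 = ((Complex.I * ℏ) : ℂ) • (1 : A))
    (hx0p1 : Commute X0 P1) (hx0p3 : Commute X0 P3)
    (hx1p0 : Commute X1 P0) (hx1p3 : Commute X1 P3)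
    (hx3p0 : Commute X3 P0) (hx3p1 : Commute X3 P1)
    (hx01 : Commute X0 X1) (hx03 : Commute X0 X3) (hx13 : Commute X1 X3)
    (hp01 : Commute P0 P1) (hp03 : Commute P0 P3) (hp13 : Commute P1 P3)
    -- Ch = cosh(βp̂₁), Sh = sinh(βp̂₁): functions of p̂₁
    (hChx0 : Commute Ch X0) (hChx3 : Commute Ch X3)
    (hShx0 : Commute Sh X0) (hShx3 : Commute Sh X3)
    (hChp0 : Commute Ch P0) (hChp1 : Commute Ch P1) (hChp3 : Commute Ch P3)
    (hShp0 : Commute Sh P0) (hShp1 : Commute Sh P1) (hShp3 : Commute Sh P3)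
    (hChSh : Commute Ch Sh) (hpyth : Ch * Ch - Sh * Sh = 1)
    (hx1Ch : X1 * Ch - Ch * X1 = ((Complex.I * ℏ * β) : ℂ) • Sh)
    (hx1Sh : X1 * Sh - Sh * X1 = ((Complex.I * ℏ * β) : ℂ) • Ch) :
    -- cross relations and commuting momenta
    (P0 * (X1 + (β : ℂ) • (X3 * P0 - P3 * X0))
        - (X1 + (β : ℂ) • (X3 * P0 - P3 * X0)) * P0
      = (-(Complex.I * ℏ * β) : ℂ) • P3) ∧
    (P3 * (X1 + (β : ℂ) • (X3 * P0 - P3 * X0))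
        - (X1 + (β : ℂ) • (X3 * P0 - P3 * X0)) * P3
      = (-(Complex.I * ℏ * β) : ℂ) • P0) ∧
    (P0 * (Sh * X0 + Ch * X3) - (Sh * X0 + Ch * X3) * P0
      = ((Complex.I * ℏ) : ℂ) • Sh) ∧
    (P3 * (Ch * X0 + Sh * X3) - (Ch * X0 + Sh * X3) * P3
      = (-(Complex.I * ℏ) : ℂ) • Sh) ∧
    (P0 * (Ch * X0 + Sh * X3) - (Ch * X0 + Sh * X3) * P0
      = ((Complex.I * ℏ) : ℂ) • Ch) ∧
    (P3 * (Sh * X0 + Ch * X3) - (Sh * X0 + Ch * X3) * P3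
      = (-(Complex.I * ℏ) : ℂ) • Ch) ∧
    (P0 * P1 - P1 * P0 = 0) ∧ (P0 * P3 - P3 * P0 = 0) ∧ (P1 * P3 - P3 * P1 = 0)  := by
  set c : ℂ := (Complex.I * ℏ : ℂ) with hc
  -- basic derived relations
  have e0 : P0 * X0 - X0 * P0 = c • (1 : A) := by
    have h := congrArg Neg.neg hx0p0
    simpa [neg_sub, neg_smul] using h
  have e3 : P3 * X3 - X3 * P3 = (-c) • (1 : A) := by
    have h := congrArg Neg.neg hx3p3
    simpa [neg_sub, neg_smul] using h
  -- commutator with a product C*X where C commutes with P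
  have aux1 : ∀ (P C X : A), C * P = P * C →
      P * (C * X) - (C * X) * P = C * (P * X - X * P) := by
    intro P C X h
    calc P * (C * X) - (C * X) * P
        = (P * C) * X - C * (X * P) := by rw [mul_assoc C X P, ← mul_assoc P C X]
      _ = (C * P) * X - C * (X * P) := by rw [h]
      _ = C * (P * X - X * P) := by rw [mul_sub, mul_assoc]
  have aux2 : ∀ (P Y Z : A), P * (Y + Z) - (Y + Z) * P
      = (P * Y - Y * P) + (P * Z - Z * P) := by
    intro P Y Z; noncomm_ring
  -- zero commutators
  have z10 : P0 * X1 - X1 * P0 = 0 := sub_eq_zero.mpr hx1p0.symm.eq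
  have z13 : P3 * X1 - X1 * P3 = 0 := sub_eq_zero.mpr hx1p3.symm.eq
  have z30 : P0 * X3 - X3 * P0 = 0 := sub_eq_zero.mpr hx3p0.symm.eq
  have z03 : P3 * X0 - X0 * P3 = 0 := sub_eq_zero.mpr hx0p3.symm.eq
  -- key commutators for parts 1 and 2
  have hA1 : P0 * (X3 * P0) - (X3 * P0) * P0 = 0 := by
    rw [← mul_assoc, ← hx3p0.eq]; exact sub_self _
  have hB1 : P0 * (P3 * X0) - (P3 * X0) * P0 = c • P3 := by
    have h1 : P0 * (P3 * X0) = P3 * (P0 * X0) := by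
      rw [← mul_assoc, hp03.eq, mul_assoc]
    calc P0 * (P3 * X0) - (P3 * X0) * P0
        = P3 * (P0 * X0 - X0 * P0) := by rw [h1, mul_assoc, ← mul_sub]
      _ = P3 * (c • (1 : A)) := by rw [e0]
      _ = c • P3 := by rw [mul_smul_comm, mul_one]
  have key1 : P0 * (X3 * P0 - P3 * X0) - (X3 * P0 - P3 * X0) * P0 = (-c) • P3 := by
    calc P0 * (X3 * P0 - P3 * X0) - (X3 * P0 - P3 * X0) * P0
        = (P0 * (X3 * P0) - (X3 * P0) * P0) - (P0 * (P3 * X0) - (P3 * X0) * P0) := by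
          noncomm_ring
      _ = 0 - c • P3 := by rw [hA1, hB1]
      _ = (-c) • P3 := by rw [zero_sub, neg_smul]
  have hA2 : P3 * (X3 * P0) - (X3 * P0) * P3 = (-c) • P0 := by
    have h1 : (X3 * P0) * P3 = (X3 * P3) * P0 := by
      rw [mul_assoc, hp03.eq, ← mul_assoc]
    calc P3 * (X3 * P0) - (X3 * P0) * P3
        = (P3 * X3 - X3 * P3) * P0 := by rw [h1, ← mul_assoc, ← sub_mul]
      _ = ((-c) • (1 : A)) * P0 := by rw [e3]
      _ = (-c) • P0 := by rw [smul_mul_assoc, one_mul]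
  have hB2 : P3 * (P3 * X0) - (P3 * X0) * P3 = 0 := by
    rw [mul_assoc, hx0p3.eq]; exact sub_self _
  have key2 : P3 * (X3 * P0 - P3 * X0) - (X3 * P0 - P3 * X0) * P3 = (-c) • P0 := by
    calc P3 * (X3 * P0 - P3 * X0) - (X3 * P0 - P3 * X0) * P3
        = (P3 * (X3 * P0) - (X3 * P0) * P3) - (P3 * (P3 * X0) - (P3 * X0) * P3) := by
          noncomm_ring
      _ = (-c) • P0 - 0 := by rw [hA2, hB2]
      _ = (-c) • P0 := by rw [sub_zero]
  have expand : ∀ (P Y Z : A) (r : ℂ), P * (Y + r • Z) - (Y + r • Z) * P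
      = (P * Y - Y * P) + r • (P * Z - Z * P) := by
    intro P Y Z r
    simp only [mul_add, add_mul, mul_smul_comm, smul_mul_assoc, smul_sub]
    abel
  refine ⟨?_, ?_, ?_, ?_, ?_, ?_, ?_, ?_, ?_⟩
  · rw [expand, z10, key1, zero_add, smul_smul]
    congr 1
    simp [hc]; ring
  · rw [expand, z13, key2, zero_add, smul_smul]
    congr 1
    simp [hc]; ring
  · rw [aux2, aux1 P0 Sh X0 hShp0.eq, aux1 P0 Ch X3 hChp0.eq, e0, z30,
      mul_zero, add_zero, mul_smul_comm, mul_one]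
  · rw [aux2, aux1 P3 Ch X0 hChp3.eq, aux1 P3 Sh X3 hShp3.eq, e3, z03,
      mul_zero, zero_add, mul_smul_comm, mul_one]
  · rw [aux2, aux1 P0 Ch X0 hChp0.eq, aux1 P0 Sh X3 hShp0.eq, e0, z30,
      mul_zero, add_zero, mul_smul_comm, mul_one]
  · rw [aux2, aux1 P3 Sh X0 hShp3.eq, aux1 P3 Ch X3 hChp3.eq, e3, z03,
      mul_zero, zero_add, mul_smul_comm, mul_one]
  · exact sub_eq_zero.mpr hp01.eq
  · exact sub_eq_zero.mpr hp03.eq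
  · exact sub_eq_zero.mpr hp13.eq
end
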